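/- For every integer M ≥ 2, the eigenvalues of the matrix A are exactly −1, (M−1 + i·√(2M−1))/M, and (M−1 − i·√(2M−1))/M, and these three complex numbers are pairwise distinct; moreover the two non-real eigenvalues have modulus 1. -/

import Mathlib

/-- The reduced `3 × 3` transition matrix of the star-graph quantum walk with `M` edges:
rows `(0, (M−2)/M, −2/M)`, `(1, 0, 0)`, `(0, 2(M−1)/M, (M−2)/M)`. -/
noncomputable def starA (M : ℕ) : Matrix (Fin 3) (Fin 3) ℂ :=
  !![0, ((M : ℂ) - 2) / M, -2 / M;
     1, 0, 0;
     0, 2 * ((M : ℂ) - 1) / M, ((M : ℂ) - 2) / M]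

/-!
The characteristic polynomial of `starA M` factors as `(z + 1) (z² - 2 (M - 1)/M z + 1)`.
Since `(M - 1)² + (2M - 1) = M²`, the quadratic factor has the roots `((M - 1) ± i √(2M - 1))/M`:
a pair of complex conjugates, non-real because `√(2M - 1) ≠ 0`, whose product is the constant
term `1`, so both lie on the unit circle.
-/

open Complex ComplexConjugate

lemma eval_charpoly_starA {M : ℕ} (hM : M ≠ 0) (z : ℂ) :
    (starA M).charpoly.eval z = (z + 1) * (z ^ 2 - 2 * ((M - 1) / M) * z + 1) := by
  have hM' : (M : ℂ) ≠ 0 := Nat.cast_ne_zero.mpr hM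
  rw [Matrix.eval_charpoly, Matrix.det_fin_three]
  simp only [Matrix.scalar_apply, starA, Fin.isValue, Matrix.sub_apply, Matrix.diagonal_apply_eq,
    Matrix.of_apply, Matrix.cons_val', Matrix.cons_val_zero, Matrix.cons_val_fin_one, sub_zero,
    Matrix.cons_val_one, Matrix.cons_val, ne_eq, Fin.reduceEq, not_false_eq_true,
    Matrix.diagonal_apply_ne, sub_self, mul_zero, zero_sub, mul_neg, zero_mul, neg_zero, zero_ne_one,
    one_ne_zero, mul_one, neg_neg, add_zero, neg_mul]
  field_simp
  ring

lemma sq_sub_two_mul_sub_one_div_mul_add_one_eq {m s z : ℂ} (hm : m ≠ 0)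
    (hs : s ^ 2 = 2 * m - 1) :
    z ^ 2 - 2 * ((m - 1) / m) * z + 1 =
      (z - (m - 1 + I * s) / m) * (z - (m - 1 - I * s) / m) := by
  field_simp
  ring_nf
  rw [I_sq, hs]
  ring

lemma spectrum_starA {M : ℕ} (hM : M ≠ 0) {s : ℂ} (hs : s ^ 2 = 2 * M - 1) :
    spectrum ℂ (starA M) = {-1, ((M : ℂ) - 1 + I * s) / M, ((M : ℂ) - 1 - I * s) / M} := by
  ext z
  rw [Matrix.mem_spectrum_iff_isRoot_charpoly, Polynomial.IsRoot.def, eval_charpoly_starA hM,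
    sq_sub_two_mul_sub_one_div_mul_add_one_eq (Nat.cast_ne_zero.mpr hM) hs]
  simp [sub_eq_zero, add_eq_zero_iff_eq_neg]

lemma sub_I_mul_div_natCast_eq_conj (M : ℕ) (s : ℝ) :
    ((M : ℂ) - 1 - I * s) / M = conj (((M : ℂ) - 1 + I * s) / M) := by
  simp [sub_eq_add_neg]

lemma norm_sub_one_add_I_mul_div_eq_one {M : ℕ} (hM : M ≠ 0) {s : ℝ} (hs : s ^ 2 = 2 * M - 1) :
    ‖((M : ℂ) - 1 + I * s) / M‖ = 1 := by
  rw [← pow_eq_one_iff_of_nonneg (norm_nonneg _) two_ne_zero, ← normSq_eq_norm_sq, normSq_apply]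
  simp only [div_natCast_re, add_re, sub_re, natCast_re, one_re, mul_re, I_re, ofReal_re, zero_mul,
    I_im, ofReal_im, mul_zero, sub_self, add_zero, div_natCast_im, add_im, sub_im, natCast_im, one_im,
    mul_im, one_mul, zero_add]
  field_simp
  linear_combination hs

/-- For every integer `M ≥ 2`, the eigenvalues of the reduced transition matrix `A` are
exactly `−1`, `(M−1 + i√(2M−1))/M` and `(M−1 − i√(2M−1))/M`; these three complex numbers are
pairwise distinct, and the two non-real eigenvalues have modulus `1`. -/
theorem starA_eigenvalues (M : ℕ) (hM : 2 ≤ M) :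
    spectrum ℂ (starA M) =
        {-1, (((M : ℂ) - 1) + Complex.I * (Real.sqrt (2 * M - 1) : ℝ)) / M,
             (((M : ℂ) - 1) - Complex.I * (Real.sqrt (2 * M - 1) : ℝ)) / M} ∧
      ((-1 : ℂ) ≠ (((M : ℂ) - 1) + Complex.I * (Real.sqrt (2 * M - 1) : ℝ)) / M ∧
        (-1 : ℂ) ≠ (((M : ℂ) - 1) - Complex.I * (Real.sqrt (2 * M - 1) : ℝ)) / M ∧
        (((M : ℂ) - 1) + Complex.I * (Real.sqrt (2 * M - 1) : ℝ)) / M ≠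
          (((M : ℂ) - 1) - Complex.I * (Real.sqrt (2 * M - 1) : ℝ)) / M) ∧
      ‖(((M : ℂ) - 1) + Complex.I * (Real.sqrt (2 * M - 1) : ℝ)) / M‖ = 1 ∧
      ‖(((M : ℂ) - 1) - Complex.I * (Real.sqrt (2 * M - 1) : ℝ)) / M‖ = 1 := by
  have hM0 : M ≠ 0 := by omega
  have h2M : (0 : ℝ) < 2 * M - 1 := by
    have : (2 : ℝ) ≤ M := by exact_mod_cast hM
    linarith
  set s := √(2 * M - 1 : ℝ)
  have hs : s ^ 2 = 2 * M - 1 := Real.sq_sqrt h2M.le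
  have hζ : (((M : ℂ) - 1 + I * s) / M).im ≠ 0 := by
    simpa [hM0] using (Real.sqrt_pos.2 h2M).ne'
  rw [spectrum_starA hM0 (s := s) (by exact_mod_cast hs), sub_I_mul_div_natCast_eq_conj]
  refine ⟨rfl, ⟨?_, ?_, ?_⟩, norm_sub_one_add_I_mul_div_eq_one hM0 hs, ?_⟩
  · exact fun h => hζ (by simp [← h])
  · exact fun h => hζ (by simpa using (congrArg im h).symm)
  · exact fun h => hζ (conj_eq_iff_im.1 h.symm)
  · rw [norm_conj, norm_sub_one_add_I_mul_div_eq_one hM0 hs]
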